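/- arXiv:2306.07833 — 2 statements merged into one kernel-verified Lean document; each statement's English description precedes it below -/
import Mathlib

section
/- Let p be a prime, q = p^n \geq 3 a power of p, \mathbb{F}_{q^2} the field with q^2 elements, and S = \{ (a,b) \in \mathbb{F}_{q^2} \times \mathbb{F}_{q^2} : b^q + b = a^{q-1} \}. Let r be a natural number with r < \#S. Then the family of evaluation vectors v_{i,j} \in \mathbb{F}_{q^2}^{S}, defined by (v_{i,j})_{(a,b)} = a^i b^j, indexed by the pairs (i,j) \in \mathbb{N}^2 with 0 \leq j \leq q-1 and i\,q + j\,(q-1) \leq r, is linearly independent over \mathbb{F}_{q^2}. -/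
/-!
Write `q = pⁿ`. On a field with `q²` elements, `x ↦ x^q + x` is additive; its kernel and its
image (which lies in `{c | c^q = c}`) are root sets of polynomials of degree `q`, and their
sizes multiply to `q²`, so the kernel has exactly `q` elements. Hence every nonempty fibre
`{b | b^q + b = a^(q-1)}` of `S` over an abscissa `a` has exactly `q` points, and `#S ≤ N q`
where `N` is the number of abscissae; in particular `i q ≤ r < #S` forces `i < N`.

A relation `∑ c i j * aⁱ * bʲ = 0` on `S` with `i < N`, `j < q` is then trivial: for fixed `a`
it is a polynomial of degree `< q` in `b` with `q` roots, so every `∑ᵢ c i j * aⁱ` vanishes, and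
that is a polynomial of degree `< N` in `a` with `N` roots.
-/

open Polynomial

theorem Set.ncard_le_ncard_image_fst_mul {α β : Type*} {S : Set (α × β)} {m : ℕ}
    (hm : ∀ a ∈ Prod.fst '' S, {b | (a, b) ∈ S}.ncard ≤ m) :
    S.ncard ≤ (Prod.fst '' S).ncard * m := by
  rcases S.finite_or_infinite with hS | hS
  · set A := (hS.image Prod.fst).toFinset
    have hunion : S = ⋃ a ∈ A, Prod.mk a '' {b | (a, b) ∈ S} := by
      ext ⟨a, b⟩
      simpa [A] using fun h : (a, b) ∈ S => ⟨b, h⟩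
    calc S.ncard = (⋃ a ∈ A, Prod.mk a '' {b | (a, b) ∈ S}).ncard := congrArg _ hunion
      _ ≤ ∑ a ∈ A, (Prod.mk a '' {b | (a, b) ∈ S}).ncard := Finset.set_ncard_biUnion_le _ _
      _ ≤ ∑ _a ∈ A, m := Finset.sum_le_sum fun a ha => by
          rw [Set.ncard_image_of_injective _ (Prod.mk_right_injective a)]
          exact hm a (by simpa [A] using ha)
      _ = (Prod.fst '' S).ncard * m := by
          rw [Finset.sum_const, smul_eq_mul, Set.ncard_eq_toFinset_card _ (hS.image Prod.fst)]
  · simp [hS.ncard]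

section Polynomials

variable {K : Type*} [Field K]

theorem Polynomial.ncard_le_natDegree_of_forall_eval_eq_zero {P : K[X]} (hP : P ≠ 0) {B : Set K}
    (hB : ∀ x ∈ B, P.eval x = 0) : B.ncard ≤ P.natDegree :=
  calc B.ncard ≤ (P.rootSet K).ncard :=
        Set.ncard_le_ncard (fun x hx => (mem_rootSet.2 ⟨hP, by simpa using hB x hx⟩))
          (rootSet_finite P K)
    _ ≤ P.natDegree := ncard_rootSet_le P K

theorem ncard_setOf_pow_eq_mul_le {q : ℕ} (hq : 2 ≤ q) (u : K) :
    {x : K | x ^ q = u * x}.ncard ≤ q := by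
  have hdeg : (X ^ q - C u * X : K[X]).natDegree = q := by
    rw [natDegree_sub_eq_left_of_natDegree_lt] <;> rw [natDegree_X_pow]
    calc (C u * X).natDegree ≤ X.natDegree := natDegree_C_mul_le u X
      _ < q := by rw [natDegree_X]; omega
  have hne : (X ^ q - C u * X : K[X]) ≠ 0 := ne_zero_of_natDegree_gt (n := 0) (by omega)
  calc {x : K | x ^ q = u * x}.ncard ≤ (X ^ q - C u * X : K[X]).natDegree :=
        ncard_le_natDegree_of_forall_eval_eq_zero hne fun x hx => by simpa [sub_eq_zero] using hx
    _ = q := hdeg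

theorem eq_zero_of_forall_sum_mul_pow_eq_zero {m : ℕ} {B : Set K} (hB : m ≤ B.ncard)
    {g : Fin m → K} (h : ∀ b ∈ B, ∑ j, g j * b ^ (j : ℕ) = 0) : g = 0 := by
  classical
  suffices hP : ofFn m g = 0 from injective_ofFn m (hP.trans (map_zero _).symm)
  by_contra hP
  have hroots : B.ncard ≤ (ofFn m g).natDegree :=
    ncard_le_natDegree_of_forall_eval_eq_zero hP fun b hb => by
      simpa [ofFn_eq_sum_monomial, eval_finsetSum] using h b hb
  have := ofFn_natDegree_lt (Nat.one_le_iff_ne_zero.2 (ne_zero_of_ofFn_ne_zero hP)) g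
  omega

theorem eq_zero_of_forall_sum_mul_pow_mul_pow_eq_zero {S : Set (K × K)} {N m : ℕ}
    (hN : N ≤ (Prod.fst '' S).ncard) (hm : ∀ a ∈ Prod.fst '' S, m ≤ {b | (a, b) ∈ S}.ncard)
    {g : Fin N → Fin m → K} (h : ∀ x ∈ S, ∑ i, ∑ j, g i j * x.1 ^ (i : ℕ) * x.2 ^ (j : ℕ) = 0) :
    g = 0 := by
  have hcol : ∀ a ∈ Prod.fst '' S, ∀ j, ∑ i, g i j * a ^ (i : ℕ) = 0 := by
    intro a ha
    refine congrFun (eq_zero_of_forall_sum_mul_pow_eq_zero (hm a ha) fun b hb => ?_)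
    simpa only [Finset.sum_mul, Finset.sum_comm (γ := Fin N)] using h (a, b) hb
  ext i j
  exact congrFun (eq_zero_of_forall_sum_mul_pow_eq_zero hN fun a ha => hcol a ha j) i

theorem linearIndependent_monomial_eval {S : Set (K × K)} {m : ℕ}
    (hm : ∀ a ∈ Prod.fst '' S, m ≤ {b | (a, b) ∈ S}.ncard) :
    LinearIndependent K (fun ij : Fin (Prod.fst '' S).ncard × Fin m =>
      fun x : S => x.1.1 ^ (ij.1 : ℕ) * x.1.2 ^ (ij.2 : ℕ)) := by
  rw [Fintype.linearIndependent_iff]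
  intro g hg ij
  have := eq_zero_of_forall_sum_mul_pow_mul_pow_eq_zero le_rfl hm (g := fun i j => g (i, j))
    fun x hx => by simpa [Fintype.sum_prod_type, mul_assoc] using congrFun hg ⟨x, hx⟩
  exact congrFun (congrFun this ij.1) ij.2

end Polynomials

section FrobeniusAddSelf

variable (F : Type*) [Field F] (p n : ℕ) [ExpChar F p]

/-- When `#F = q²` with `q = pⁿ`, this is the trace of `F` over its subfield with `q` elements. -/
def frobeniusAddSelf : F →+ F := (iterateFrobenius F p n : F →+ F) + AddMonoidHom.id F

@[simp]
theorem frobeniusAddSelf_apply (x : F) : frobeniusAddSelf F p n x = x ^ p ^ n + x := rfl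

variable {F p n} [Fintype F]

theorem card_ker_frobeniusAddSelf (hF : Fintype.card F = (p ^ n) ^ 2) (hq : 2 ≤ p ^ n) :
    Nat.card (frobeniusAddSelf F p n).ker = p ^ n := by
  set T := frobeniusAddSelf F p n
  have hker : Nat.card T.ker ≤ p ^ n := by
    rw [← SetLike.coe_sort_coe, Nat.card_coe_set_eq]
    convert ncard_setOf_pow_eq_mul_le hq (-1 : F) using 2
    ext x
    simp [T, eq_neg_iff_add_eq_zero]
  have hrange : Nat.card T.range ≤ p ^ n := by
    rw [← SetLike.coe_sort_coe, Nat.card_coe_set_eq]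
    refine (Set.ncard_le_ncard ?_ (Set.toFinite _)).trans (ncard_setOf_pow_eq_mul_le hq (1 : F))
    rintro _ ⟨x, rfl⟩
    change (x ^ p ^ n + x) ^ p ^ n = 1 * (x ^ p ^ n + x)
    rw [add_pow_expChar_pow, ← pow_mul, ← sq, ← hF, FiniteField.pow_card, one_mul, add_comm]
  have hprod : Nat.card T.ker * Nat.card T.range = (p ^ n) ^ 2 := by
    rw [← AddSubgroup.index_ker, AddSubgroup.card_mul_index, Nat.card_eq_fintype_card, hF]
  nlinarith

theorem ncard_setOf_pow_add_self_eq (hF : Fintype.card F = (p ^ n) ^ 2) (hq : 2 ≤ p ^ n)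
    {c : F} (hc : ∃ b, b ^ p ^ n + b = c) : {b : F | b ^ p ^ n + b = c}.ncard = p ^ n := by
  obtain ⟨b, rfl⟩ := hc
  set T := frobeniusAddSelf F p n
  have hfib : {x : F | T x = T b} = (· + b) '' (T.ker : Set F) := by
    ext x
    simp only [Set.mem_ofPred_eq, Set.mem_image, SetLike.mem_coe, AddMonoidHom.mem_ker]
    refine ⟨fun hx => ⟨x - b, by rw [map_sub, hx, sub_self], sub_add_cancel x b⟩, ?_⟩
    rintro ⟨z, hz, rfl⟩
    rw [map_add, hz, zero_add]
  change {x : F | T x = T b}.ncard = p ^ n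
  rw [hfib, Set.ncard_image_of_injective _ (add_left_injective b), ← Nat.card_coe_set_eq,
    SetLike.coe_sort_coe, card_ker_frobeniusAddSelf hF hq]

end FrobeniusAddSelf

/-- Let p be prime, q = pⁿ ≥ 3, F the field with q² elements, and
S = {(a,b) ∈ F × F : b^q + b = a^(q-1)}. For r < #S, the evaluation vectors
v_{i,j} ∈ F^S, (v_{i,j})_{(a,b)} = aⁱbʲ, indexed by pairs (i,j) with j ≤ q-1 and
i·q + j·(q-1) ≤ r, are linearly independent over F. -/
theorem evaluation_vectors_linearIndependent (p n q : ℕ) [Fact p.Prime]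
    (hq : q = p ^ n) (h3 : 3 ≤ q)
    (F : Type*) [Field F] [Fintype F] (hF : Fintype.card F = q ^ 2)
    (r : ℕ) (hr : r < {ab : F × F | ab.2 ^ q + ab.2 = ab.1 ^ (q - 1)}.ncard) :
    LinearIndependent F
      (fun ij : {ij : ℕ × ℕ // ij.2 ≤ q - 1 ∧ ij.1 * q + ij.2 * (q - 1) ≤ r} =>
        (fun s : {ab : F × F | ab.2 ^ q + ab.2 = ab.1 ^ (q - 1)} =>
          s.1.1 ^ ij.1.1 * s.1.2 ^ ij.1.2 : _ → F)) := by
  subst hq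
  have : CharP F p := charP_of_card_eq_prime_pow (hF.trans (pow_mul p n 2).symm)
  set S := {ab : F × F | ab.2 ^ p ^ n + ab.2 = ab.1 ^ (p ^ n - 1)}
  have hfib : ∀ a ∈ Prod.fst '' S, {b | (a, b) ∈ S}.ncard = p ^ n := by
    rintro a ⟨x, hx, rfl⟩
    exact ncard_setOf_pow_add_self_eq hF (by omega) ⟨x.2, hx⟩
  have hS : S.ncard ≤ (Prod.fst '' S).ncard * p ^ n :=
    Set.ncard_le_ncard_image_fst_mul fun a ha => (hfib a ha).le
  have hi : ∀ ij : {ij : ℕ × ℕ // ij.2 ≤ p ^ n - 1 ∧ ij.1 * p ^ n + ij.2 * (p ^ n - 1) ≤ r},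
      ij.1.1 < (Prod.fst '' S).ncard := fun ij =>
    Nat.lt_of_mul_lt_mul_right (((Nat.le_add_right _ _).trans ij.2.2).trans_lt (hr.trans_le hS))
  let f : {ij : ℕ × ℕ // ij.2 ≤ p ^ n - 1 ∧ ij.1 * p ^ n + ij.2 * (p ^ n - 1) ≤ r} →
      Fin (Prod.fst '' S).ncard × Fin (p ^ n) := fun ij => (⟨ij.1.1, hi ij⟩, ⟨ij.1.2, by omega⟩)
  have hf : Function.Injective f := fun ij kl h => by
    simp only [f, Prod.mk.injEq, Fin.mk.injEq] at h
    exact Subtype.ext (Prod.ext h.1 h.2)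
  exact (linearIndependent_monomial_eval fun a ha => (hfib a ha).ge).comp f hf
end

section
/- Let p be a prime, q = p^n \geq 3 a power of p, \mathbb{F}_{q^2} the field with q^2 elements, and S = \{ (a,b) \in \mathbb{F}_{q^2} \times \mathbb{F}_{q^2} : b^q + b = a^{q-1} \}. Let r be an integer with (q-1)(q-2) - 1 \leq r < \#S, and let C_r \subseteq \mathbb{F}_{q^2}^{S} be the \mathbb{F}_{q^2}-linear span of the evaluation vectors v_{i,j} ((v_{i,j})_{(a,b)} = a^i b^j) over all (i,j) \in \mathbb{N}^2 with 0 \leq j \leq q-1 and i\,q + j\,(q-1) \leq r. Then \dim_{\mathbb{F}_{q^2}} C_r = r + 1 - (q-1)(q-2)/2. -/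
/-!
Two facts combine. First, the monomials `x^i y^j` with `j < q` and `i * q ≤ r` are linearly
independent as functions on `S`. Over each `a`, the points of `S` form a fibre of the trace
`b ↦ b^q + b` of `𝔽_{q²}/𝔽_q`; it is empty or a coset of the kernel, which has `q` elements.
So a vanishing combination is a polynomial of `y`-degree `< q` vanishing on `q` points of every
nonempty fibre, hence its `y`-coefficients vanish at all `#S / q` abscissae while having
`x`-degree `≤ r / q < #S / q`.

Second, the dimension is then the number of pairs `(i, j)`, i.e. the number of elements `≤ r` of
the numerical semigroup generated by `q - 1` and `q` (the weights `i * q + j * (q - 1)` with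
`j < q` are distinct). That semigroup has `(q - 1)(q - 2) / 2` gaps, all smaller than
`(q - 1)(q - 2)`.
-/

open Finset Polynomial
open scoped Polynomial.Bivariate

theorem Nat.eq_and_eq_of_mul_add_eq_mul_add {q a b x y : ℕ} (hx : x < q) (hy : y < q)
    (h : a * q + x = b * q + y) : a = b ∧ x = y := by
  have hq : 0 < q := by omega
  have ha := (Nat.div_mod_unique hq).2 ⟨show x + q * a = a * q + x by ring, hx⟩
  have hb := (Nat.div_mod_unique hq).2 ⟨show y + q * b = a * q + x by rw [h]; ring, hy⟩
  exact ⟨ha.1.symm.trans hb.1, ha.2.symm.trans hb.2⟩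

theorem Nat.exists_lt_add_eq_mul {q : ℕ} (hq : 0 < q) (v : ℕ) :
    ∃ k j, j < q ∧ v + j = k * q := by
  have hv := Nat.mod_add_div v q
  rcases Nat.eq_zero_or_pos (v % q) with h | h
  · exact ⟨v / q, 0, hq, by rw [mul_comm]; omega⟩
  · refine ⟨v / q + 1, q - v % q, by omega, ?_⟩
    have := Nat.mod_lt v hq
    rw [add_mul, one_mul, mul_comm]
    omega

theorem sum_range_sub_one (q : ℕ) : ∑ j ∈ range q, (j - 1) = (q - 1) * (q - 2) / 2 := by
  rcases q with _ | m
  · rfl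
  · simp only [sum_range_succ', Nat.add_sub_cancel, sum_range_id]
    rfl

theorem ncard_pairs_pos_lt_lt (q : ℕ) :
    {kj : ℕ × ℕ | 0 < kj.1 ∧ kj.1 < kj.2 ∧ kj.2 < q}.ncard = (q - 1) * (q - 2) / 2 := by
  have hset : {kj : ℕ × ℕ | 0 < kj.1 ∧ kj.1 < kj.2 ∧ kj.2 < q} =
      ↑{kj ∈ range q ×ˢ range q | 0 < kj.1 ∧ kj.1 < kj.2} := by
    ext ⟨k, j⟩
    simp only [Set.mem_ofPred_eq, coe_filter, mem_product, mem_range]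
    omega
  have hfiber : ∀ j ∈ range q, ∑ k ∈ range q, (if 0 < k ∧ k < j then 1 else 0) = j - 1 := by
    intro j hj
    rw [← card_filter]
    trans #(Ioo 0 j)
    · congr 1
      ext k
      simp only [mem_filter, mem_range, mem_Ioo] at hj ⊢
      omega
    · simp
  rw [hset, Set.ncard_coe_finset, card_filter, sum_product_right, sum_congr rfl hfiber,
    sum_range_sub_one]

section NumericalSemigroup

variable {q r : ℕ}

theorem mul_add_mul_sub_one_add (hq : 0 < q) (i j : ℕ) :
    i * q + j * (q - 1) + j = (i + j) * q := by
  obtain ⟨m, rfl⟩ : ∃ m, q = m + 1 := ⟨q - 1, by omega⟩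
  simp only [Nat.add_sub_cancel]
  ring

theorem injOn_mul_add_mul_sub_one (hq : 0 < q) :
    Set.InjOn (fun ij : ℕ × ℕ => ij.1 * q + ij.2 * (q - 1)) {ij | ij.2 < q} := by
  rintro ⟨i, j⟩ (hj : j < q) ⟨i', j'⟩ (hj' : j' < q)
    (h : i * q + j * (q - 1) = i' * q + j' * (q - 1))
  have key : (i + j) * q + j' = (i' + j') * q + j := by
    rw [← mul_add_mul_sub_one_add hq, ← mul_add_mul_sub_one_add hq, h]
    ring
  obtain ⟨hij, rfl⟩ := Nat.eq_and_eq_of_mul_add_eq_mul_add hj' hj key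
  simp only [Prod.mk.injEq, and_true]
  omega

theorem injOn_mul_sub :
    Set.InjOn (fun kj : ℕ × ℕ => kj.1 * q - kj.2) {kj | 0 < kj.1 ∧ kj.2 < q} := by
  rintro ⟨k, j⟩ ⟨hk, hj⟩ ⟨k', j'⟩ ⟨hk', hj'⟩ (h : k * q - j = k' * q - j')
  have hkq : q ≤ k * q := Nat.le_mul_of_pos_left q hk
  have hkq' : q ≤ k' * q := Nat.le_mul_of_pos_left q hk'
  obtain ⟨rfl, rfl⟩ :=
    Nat.eq_and_eq_of_mul_add_eq_mul_add hj' hj (show k * q + j' = k' * q + j by omega)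
  rfl

theorem disjoint_image_mul_add_mul_sub_one_image_mul_sub (hq : 0 < q) :
    Disjoint ((fun ij : ℕ × ℕ => ij.1 * q + ij.2 * (q - 1)) '' {ij | ij.2 < q})
      ((fun kj : ℕ × ℕ => kj.1 * q - kj.2) '' {kj | 0 < kj.1 ∧ kj.1 < kj.2 ∧ kj.2 < q}) := by
  rw [Set.disjoint_left]
  rintro _ ⟨⟨i, j⟩, (hj : j < q), rfl⟩ ⟨⟨k, j'⟩, ⟨hk, hkj, hj'⟩, h⟩
  have hkq : q ≤ k * q := Nat.le_mul_of_pos_left q hk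
  have := mul_add_mul_sub_one_add hq i j
  obtain ⟨rfl, rfl⟩ := Nat.eq_and_eq_of_mul_add_eq_mul_add hj hj'
    (show k * q + j = (i + j) * q + j' by simp only at h; omega)
  omega

/-- Write `v = k * q - j` with `j < q`: `v` lies in the semigroup generated by `q - 1` and `q`
iff `j ≤ k`, and the gaps (`k < j`) are at most `(q - 1)(q - 2) - 1`. -/
theorem image_mul_add_mul_sub_one_union_image_mul_sub (hq : 0 < q)
    (hr : (q - 1) * (q - 2) - 1 ≤ r) :
    (fun ij : ℕ × ℕ => ij.1 * q + ij.2 * (q - 1)) ''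
        {ij | ij.2 ≤ q - 1 ∧ ij.1 * q + ij.2 * (q - 1) ≤ r} ∪
      (fun kj : ℕ × ℕ => kj.1 * q - kj.2) '' {kj | 0 < kj.1 ∧ kj.1 < kj.2 ∧ kj.2 < q} =
      Set.Iic r := by
  ext v
  simp only [Set.mem_union, Set.mem_image, Set.mem_ofPred_eq, Set.mem_Iic, Prod.exists]
  constructor
  · rintro (⟨i, j, ⟨-, hv⟩, rfl⟩ | ⟨k, j, ⟨hk, hkj, hj⟩, rfl⟩)
    · exact hv
    · have hkq := mul_add_mul_sub_one_add hq 0 k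
      simp only [zero_mul, zero_add] at hkq
      have : k * (q - 1) ≤ (q - 2) * (q - 1) := Nat.mul_le_mul_right _ (by omega)
      have : (q - 1) * (q - 2) = (q - 2) * (q - 1) := mul_comm _ _
      omega
  · intro hv
    obtain ⟨k, j, hj, hvk⟩ := Nat.exists_lt_add_eq_mul hq v
    by_cases hjk : j ≤ k
    · have := mul_add_mul_sub_one_add hq (k - j) j
      rw [Nat.sub_add_cancel hjk] at this
      exact Or.inl ⟨k - j, j, ⟨by omega, by omega⟩, by omega⟩
    · exact Or.inr ⟨k, j, ⟨Nat.pos_of_ne_zero (by rintro rfl; omega), by omega, hj⟩, by omega⟩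

theorem ncard_setOf_mul_add_mul_sub_one_le (hq : 0 < q) (hr : (q - 1) * (q - 2) - 1 ≤ r) :
    {ij : ℕ × ℕ | ij.2 ≤ q - 1 ∧ ij.1 * q + ij.2 * (q - 1) ≤ r}.ncard =
      r + 1 - (q - 1) * (q - 2) / 2 := by
  have hT : {ij : ℕ × ℕ | ij.2 ≤ q - 1 ∧ ij.1 * q + ij.2 * (q - 1) ≤ r} ⊆ {ij | ij.2 < q} :=
    fun ij hij => show ij.2 < q by have := hij.1; omega
  have hG : {kj : ℕ × ℕ | 0 < kj.1 ∧ kj.1 < kj.2 ∧ kj.2 < q} ⊆ {kj | 0 < kj.1 ∧ kj.2 < q} :=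
    fun kj hkj => ⟨hkj.1, hkj.2.2⟩
  have hunion := image_mul_add_mul_sub_one_union_image_mul_sub hq hr
  have hcard := Set.ncard_union_eq
    ((disjoint_image_mul_add_mul_sub_one_image_mul_sub hq).mono_left (Set.image_mono hT))
    ((Set.finite_Iic r).subset (hunion ▸ Set.subset_union_left))
    ((Set.finite_Iic r).subset (hunion ▸ Set.subset_union_right))
  rw [hunion, ((injOn_mul_add_mul_sub_one hq).mono hT).ncard_image,
    (injOn_mul_sub.mono hG).ncard_image, ncard_pairs_pos_lt_lt,
    ← Finset.coe_Iic, Set.ncard_coe_finset, Nat.card_Iic] at hcard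
  omega

end NumericalSemigroup

theorem Polynomial.ncard_setOf_eval_eq_zero_le {R : Type*} [CommRing R] [IsDomain R]
    {P : R[X]} (hP : P ≠ 0) : {x | P.eval x = 0}.ncard ≤ P.natDegree := by
  refine le_of_eq_of_le ?_ (ncard_rootSet_le P R)
  congr 1
  ext x
  simp [mem_rootSet, hP]

theorem Polynomial.eq_zero_of_natDegree_lt_card_of_evalEval_eq_zero {R : Type*} [CommRing R]
    [IsDomain R] (P : R[X][Y]) (A : Finset R) (B : R → Finset R)
    (hP : ∀ a ∈ A, ∀ b ∈ B a, P.evalEval a b = 0)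
    (hY : ∀ a ∈ A, P.natDegree < #(B a)) (hX : ∀ j, (P.coeff j).natDegree < #A) : P = 0 := by
  have hrow : ∀ a ∈ A, P.map (evalRingHom a) = 0 := fun a ha =>
    eq_zero_of_natDegree_lt_card_of_eval_eq_zero' _ (B a)
      (fun b hb => by rw [map_evalRingHom_eval]; exact hP a ha b hb)
      (natDegree_map_le.trans_lt (hY a ha))
  ext j : 1
  refine eq_zero_of_natDegree_lt_card_of_eval_eq_zero' _ A (fun a ha => ?_) (hX j)
  simpa using congrArg (coeff · j) (hrow a ha)

theorem linearIndependent_monomial_eval_s12 {F : Type*} [Field F] (S : Set (F × F))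
    (I : Set (ℕ × ℕ)) (A : Finset F) (B : F → Finset F) (m : ℕ)
    (hS : ∀ a ∈ A, ∀ b ∈ B a, (a, b) ∈ S) (hB : ∀ a ∈ A, m ≤ #(B a))
    (hI : ∀ ij ∈ I, ij.1 < #A ∧ ij.2 < m) :
    LinearIndependent F (fun ij : I => fun s : S => s.1.1 ^ ij.1.1 * s.1.2 ^ ij.1.2) := by
  rw [linearIndependent_iff']
  intro s g hg t ht
  set P : F[X][Y] := ∑ u ∈ s, monomial u.1.2 (monomial u.1.1 (g u)) with hP
  have hm : 0 < m := by have := (hI t t.2).2; omega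
  have hA : 0 < #A := by have := (hI t t.2).1; omega
  have hP0 : P = 0 := by
    refine eq_zero_of_natDegree_lt_card_of_evalEval_eq_zero P A B (fun a ha b hb => ?_)
      (fun a ha => ?_) (fun j => ?_)
    · have hab := congrFun hg ⟨(a, b), hS a ha b hb⟩
      simp only [Finset.sum_apply, Pi.smul_apply, smul_eq_mul, Pi.zero_apply] at hab
      simp only [hP, evalEval_finsetSum, evalEval, eval_monomial, eval_mul, eval_pow, eval_C]
      rw [← hab]
      refine sum_congr rfl fun u _ => ?_
      ring
    · refine lt_of_lt_of_le ?_ (hB a ha)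
      refine (natDegree_sum_le_of_forall_le _ _ (n := m - 1) fun u _ => ?_).trans_lt (by omega)
      exact (natDegree_monomial_le _).trans (by have := (hI u u.2).2; omega)
    · rw [hP, finsetSum_coeff]
      refine (natDegree_sum_le_of_forall_le _ _ (n := #A - 1) fun u _ => ?_).trans_lt (by omega)
      rw [coeff_monomial]
      split_ifs
      · exact (natDegree_monomial_le _).trans (by have := (hI u u.2).1; omega)
      · simp
  have hcoeff := congrArg (fun Q : F[X][Y] => (Q.coeff t.1.2).coeff t.1.1) hP0
  simp only [hP, finsetSum_coeff, coeff_monomial, coeff_zero] at hcoeff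
  rwa [sum_eq_single t (fun u _ hut => ?_) (fun h => absurd ht h), if_pos rfl,
    coeff_monomial_same] at hcoeff
  split_ifs with h2
  · rw [coeff_monomial, if_neg fun h1 => hut (Subtype.ext (Prod.ext h1 h2))]
  · rfl

theorem LinearIndependent.finrank_span_eq_natCard {R M ι : Type*} [Ring R] [Nontrivial R]
    [StrongRankCondition R] [AddCommGroup M] [Module R M] {v : ι → M}
    (hv : LinearIndependent R v) :
    Module.finrank R (Submodule.span R (Set.range v)) = Nat.card ι :=
  (congrArg Cardinal.toNat (rank_span hv)).trans (Nat.card_range_of_injective hv.injective)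

section Trace

variable (F : Type*) [Field F] (p n : ℕ) [ExpChar F p]

/-- With `q = p ^ n` and `F = 𝔽_{q²}`, this is the trace `b ↦ b ^ q + b` onto `𝔽_q`. -/
def iterateFrobeniusAddId : F →+ F :=
  (iterateFrobenius F p n).toAddMonoidHom + AddMonoidHom.id F

variable {F p n}

@[simp]
theorem iterateFrobeniusAddId_apply (x : F) :
    iterateFrobeniusAddId F p n x = x ^ p ^ n + x := by
  simp [iterateFrobeniusAddId, iterateFrobenius_def]

theorem card_ker_iterateFrobeniusAddId_le (h : 1 < p ^ n) :
    Nat.card (iterateFrobeniusAddId F p n).ker ≤ p ^ n := by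
  have hdeg : ((X : F[X]) ^ p ^ n + X).natDegree = p ^ n := by
    rw [natDegree_add_eq_left_of_natDegree_lt] <;> simp [h]
  have hne : (X : F[X]) ^ p ^ n + X ≠ 0 := fun h0 => by simp [h0] at hdeg; omega
  rw [← hdeg, ← SetLike.coe_sort_coe, Nat.card_coe_set_eq]
  refine le_of_eq_of_le ?_ (ncard_setOf_eval_eq_zero_le hne)
  congr 1
  ext x
  simp

theorem card_range_iterateFrobeniusAddId_le [Fintype F] (hF : Fintype.card F = (p ^ n) ^ 2)
    (h : 1 < p ^ n) : Nat.card (iterateFrobeniusAddId F p n).range ≤ p ^ n := by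
  have hdeg : ((X : F[X]) ^ p ^ n - X).natDegree = p ^ n := by
    rw [natDegree_sub_eq_left_of_natDegree_lt] <;> simp [h]
  have hne : (X : F[X]) ^ p ^ n - X ≠ 0 := fun h0 => by simp [h0] at hdeg; omega
  rw [← hdeg, ← SetLike.coe_sort_coe, Nat.card_coe_set_eq]
  refine (Set.ncard_le_ncard ?_ (Set.toFinite _)).trans (ncard_setOf_eval_eq_zero_le hne)
  rintro _ ⟨b, rfl⟩
  have hb : (b ^ p ^ n) ^ p ^ n = b := by rw [← pow_mul, ← sq, ← hF, FiniteField.pow_card]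
  simp only [Set.mem_ofPred_eq, eval_sub, eval_pow, eval_X, iterateFrobeniusAddId_apply,
    add_pow_expChar_pow, hb]
  ring

theorem card_ker_iterateFrobeniusAddId [Fintype F] (hF : Fintype.card F = (p ^ n) ^ 2) :
    Nat.card (iterateFrobeniusAddId F p n).ker = p ^ n := by
  have h : 1 < p ^ n := (one_lt_pow_iff two_ne_zero).1 (hF ▸ Fintype.one_lt_card)
  have hprod := AddSubgroup.card_mul_index (iterateFrobeniusAddId F p n).ker
  rw [AddSubgroup.index_ker, Nat.card_eq_fintype_card (α := F), hF] at hprod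
  have hker := card_ker_iterateFrobeniusAddId_le (F := F) h
  have hrange := card_range_iterateFrobeniusAddId_le hF h
  nlinarith

theorem card_filter_pow_add_self_eq [Fintype F] [DecidableEq F]
    (hF : Fintype.card F = (p ^ n) ^ 2) {c : F} (hc : ∃ b, b ^ p ^ n + b = c) :
    #{b | b ^ p ^ n + b = c} = p ^ n := by
  have hc' : c ∈ Set.range (iterateFrobeniusAddId F p n) := by simpa using hc
  have h0 : (0 : F) ∈ Set.range (iterateFrobeniusAddId F p n) := ⟨0, map_zero _⟩
  have hfiber := AddMonoidHom.card_fiber_eq_of_mem_range _ hc' h0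
  simp only [iterateFrobeniusAddId_apply] at hfiber
  rw [hfiber, ← Fintype.card_subtype, ← Nat.card_eq_fintype_card]
  exact (Nat.card_congr (Equiv.subtypeEquivRight fun x => by simp)).trans
    (card_ker_iterateFrobeniusAddId hF)

theorem ncard_setOf_pow_add_self_eq_le [Fintype F] [DecidableEq F]
    (hF : Fintype.card F = (p ^ n) ^ 2) (f : F → F) :
    {ab : F × F | ab.2 ^ p ^ n + ab.2 = f ab.1}.ncard ≤
      p ^ n * #{a | ∃ b, b ^ p ^ n + b = f a} := by
  rw [Set.ncard_eq_toFinset_card']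
  refine card_le_mul_card_image_of_maps_to (f := Prod.fst)
    (fun ab hab => by simp only [Set.mem_toFinset, Set.mem_ofPred_eq] at hab; simpa using ⟨_, hab⟩)
    _ fun a ha => ?_
  calc #{ab ∈ Set.toFinset {ab : F × F | ab.2 ^ p ^ n + ab.2 = f ab.1} | ab.1 = a}
      ≤ #{b | b ^ p ^ n + b = f a} :=
        card_le_card_of_injOn Prod.snd (fun ab hab => by simp_all)
          (fun ab hab ab' hab' h => by simp_all [Prod.ext_iff])
    _ = p ^ n := card_filter_pow_add_self_eq hF (by simpa using ha)

end Trace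

theorem code_dimension_riemann_roch_general (p n q : ℕ) [Fact p.Prime]
    (hq : q = p ^ n)
    (F : Type*) [Field F] [Fintype F] (hF : Fintype.card F = q ^ 2)
    (r : ℕ) (hr1 : (q - 1) * (q - 2) - 1 ≤ r)
    (hr2 : r < {ab : F × F | ab.2 ^ q + ab.2 = ab.1 ^ (q - 1)}.ncard) :
    Module.finrank F
      (Submodule.span F (Set.range
        (fun ij : {ij : ℕ × ℕ // ij.2 ≤ q - 1 ∧ ij.1 * q + ij.2 * (q - 1) ≤ r} =>
          (fun s : {ab : F × F | ab.2 ^ q + ab.2 = ab.1 ^ (q - 1)} =>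
            s.1.1 ^ ij.1.1 * s.1.2 ^ ij.1.2 : _ → F))))
      = r + 1 - (q - 1) * (q - 2) / 2 := by
  classical
  subst hq
  have : CharP F p := charP_of_card_eq_prime_pow (by rw [hF, ← pow_mul])
  have hpos : 0 < p ^ n := pow_pos (Fact.out : p.Prime).pos n
  have hS := ncard_setOf_pow_add_self_eq_le hF (· ^ (p ^ n - 1))
  have hli := linearIndependent_monomial_eval_s12
    {ab : F × F | ab.2 ^ p ^ n + ab.2 = ab.1 ^ (p ^ n - 1)}
    {ij : ℕ × ℕ | ij.2 ≤ p ^ n - 1 ∧ ij.1 * p ^ n + ij.2 * (p ^ n - 1) ≤ r}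
    {a | ∃ b, b ^ p ^ n + b = a ^ (p ^ n - 1)} (fun a => {b | b ^ p ^ n + b = a ^ (p ^ n - 1)})
    (p ^ n) (fun a _ b hb => by simpa using hb)
    (fun a ha => (card_filter_pow_add_self_eq hF (by simpa using ha)).ge)
    (fun ij hij => ⟨Nat.lt_of_mul_lt_mul_left (a := p ^ n) (by nlinarith [hij.2, hS, hr2]),
      by have := hij.1; omega⟩)
  refine hli.finrank_span_eq_natCard.trans ?_
  rw [Nat.card_coe_set_eq, ncard_setOf_mul_add_mul_sub_one_le hpos hr1]

/-- Let p be prime, q = pⁿ ≥ 3, F the field with q² elements, and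
S = {(a,b) ∈ F × F : b^q + b = a^(q-1)}. For (q-1)(q-2) - 1 ≤ r < #S, the span C_r
of the evaluation vectors v_{i,j} ((v_{i,j})_{(a,b)} = aⁱbʲ) over pairs (i,j) with
j ≤ q-1 and i·q + j·(q-1) ≤ r has dimension r + 1 - (q-1)(q-2)/2. -/
theorem code_dimension_riemann_roch (p n q : ℕ) [Fact p.Prime]
    (hq : q = p ^ n) (h3 : 3 ≤ q)
    (F : Type*) [Field F] [Fintype F] (hF : Fintype.card F = q ^ 2)
    (r : ℕ) (hr1 : (q - 1) * (q - 2) - 1 ≤ r)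
    (hr2 : r < {ab : F × F | ab.2 ^ q + ab.2 = ab.1 ^ (q - 1)}.ncard) :
    Module.finrank F
      (Submodule.span F (Set.range
        (fun ij : {ij : ℕ × ℕ // ij.2 ≤ q - 1 ∧ ij.1 * q + ij.2 * (q - 1) ≤ r} =>
          (fun s : {ab : F × F | ab.2 ^ q + ab.2 = ab.1 ^ (q - 1)} =>
            s.1.1 ^ ij.1.1 * s.1.2 ^ ij.1.2 : _ → F))))
      = r + 1 - (q - 1) * (q - 2) / 2 :=
  code_dimension_riemann_roch_general p n q hq F hF r hr1 hr2
end
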